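/- arXiv:2009.05497 — 2 statements merged into one kernel-verified Lean document; each statement's English description precedes it below -/
import Mathlib

section
/- The map V defined by V(X)(h,t) = X(t/(1+h), t/(1+h⁻¹)) is a linear isometry of L²(ℝ^× × ℝ^×, dμ×dμ) into itself, where μ is the measure dt/|t| on ℝ \ {0}. In particular, for every X in this L² space, ‖V(X)‖₂ = ‖X‖₂. -/
open MeasureTheory

/-- The measure `dt/|t|` on `ℝ`, Haar measure of `ℝˣ`. -/
noncomputable def mulHaar : Measure ℝ :=
  volume.withDensity fun t => ENNReal.ofReal (1 / |t|)

/-- The operator `V(X)(h,t) = X(t/(1+h), t/(1+h⁻¹))`. -/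
noncomputable def Vop (X : ℝ × ℝ → ℂ) : ℝ × ℝ → ℂ :=
  fun p => X (p.2 / (1 + p.1), p.2 / (1 + p.1⁻¹))

/-!
Off the null set `h = 0`, the change of variables `(h, t) ↦ (t/(1+h), t/(1+h⁻¹))` factors as
`(h, t) ↦ (h, t/(1+h)) ↦ (t/(1+h), h) ↦ (u, u h)`: two shears, each acting on one coordinate by
multiplication with a constant depending on the other, and a swap. Since `dt/|t|` is invariant
under every dilation `t ↦ a t` with `a ≠ 0`, each factor preserves `μ × μ`, hence so does the
change of variables, and composing with a measure-preserving map preserves `L²` norms.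
-/

instance : SigmaFinite mulHaar := by
  unfold mulHaar; infer_instance

instance : NullSingletonClass mulHaar := by
  unfold mulHaar; infer_instance

lemma map_const_mul_mulHaar {a : ℝ} (ha : a ≠ 0) : Measure.map (a * ·) mulHaar = mulHaar := by
  have hm : Measurable (a * · : ℝ → ℝ) := measurable_const_mul a
  have hdensity (t : ℝ) :
      ENNReal.ofReal (1 / |a * t|) = ENNReal.ofReal |a⁻¹| * ENNReal.ofReal (1 / |t|) := by
    rw [← ENNReal.ofReal_mul (abs_nonneg _), abs_mul, abs_inv, one_div, one_div, mul_inv]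
  ext s hs
  have hscaled : ENNReal.ofReal |a⁻¹| * Measure.map (a * ·) mulHaar s
      = ENNReal.ofReal |a⁻¹| * mulHaar s := by
    calc ENNReal.ofReal |a⁻¹| * Measure.map (a * ·) mulHaar s
        = ∫⁻ t in (a * ·) ⁻¹' s, ENNReal.ofReal (1 / |a * t|) := by
          simp only [hdensity, lintegral_const_mul' _ _ ENNReal.ofReal_ne_top]
          rw [Measure.map_apply hm hs, mulHaar, withDensity_apply _ (hm hs)]
      _ = ∫⁻ u in s, ENNReal.ofReal (1 / |u|) ∂(Measure.map (a * ·) volume) := by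
          rw [Measure.restrict_map hm hs, lintegral_map (by fun_prop) hm]
      _ = ENNReal.ofReal |a⁻¹| * mulHaar s := by
          rw [Real.map_volume_mul_left ha, Measure.restrict_smul, lintegral_smul_measure,
            mulHaar, withDensity_apply _ hs, smul_eq_mul]
  exact (ENNReal.mul_right_inj (by positivity) ENNReal.ofReal_ne_top).mp hscaled

lemma measurePreserving_mul_snd_mulHaar {g : ℝ → ℝ} (hg : Measurable g)
    (hg₀ : ∀ᵐ h ∂mulHaar, g h ≠ 0) :
    MeasurePreserving (fun p : ℝ × ℝ => (p.1, g p.1 * p.2))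
      (mulHaar.prod mulHaar) (mulHaar.prod mulHaar) :=
  (MeasurePreserving.id mulHaar).skew_product (g := fun h t => g h * t) (by fun_prop)
    (hg₀.mono fun _ => map_const_mul_mulHaar)

noncomputable def vopCoords (p : ℝ × ℝ) : ℝ × ℝ :=
  (p.2 / (1 + p.1), p.2 / (1 + p.1⁻¹))

lemma vopCoords_eq_of_ne_zero {h : ℝ} (hh : h ≠ 0) (t : ℝ) :
    vopCoords (h, t) = (t / (1 + h), t / (1 + h) * h) := by
  by_cases hh' : 1 + h = 0
  -- at `h = -1` both sides are `(0, 0)`, because `t / 0 = 0`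
  · have : h = -1 := by linarith
    simp [vopCoords, this]
  · have : 1 + h⁻¹ = (1 + h) / h := by field_simp; ring
    simp only [vopCoords, this]
    field_simp

lemma measurePreserving_vopCoords :
    MeasurePreserving vopCoords (mulHaar.prod mulHaar) (mulHaar.prod mulHaar) := by
  have hshear₁ := measurePreserving_mul_snd_mulHaar (g := fun h => (1 + h)⁻¹) (by fun_prop)
    (by filter_upwards [mulHaar.ae_ne (-1)] with h hh
        exact inv_ne_zero fun h' => hh (by linarith))
  have hshear₂ := measurePreserving_mul_snd_mulHaar measurable_id (mulHaar.ae_ne 0)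
  refine ((hshear₂.comp Measure.measurePreserving_swap).comp hshear₁).congr
    (by unfold vopCoords; fun_prop) ?_
  filter_upwards [Measure.quasiMeasurePreserving_fst.ae (mulHaar.ae_ne 0)] with ⟨h, t⟩ hh
  rw [vopCoords_eq_of_ne_zero hh]
  simp [div_eq_inv_mul]

/-- The map `V` given by `V(X)(h,t) = X(t/(1+h), t/(1+h⁻¹))` is a linear isometry of
`L²(ℝˣ × ℝˣ, μ × μ)` into itself, where `μ = dt/|t|`; in particular
`‖V(X)‖₂ = ‖X‖₂`. -/
theorem Vop_linear_isometry :
    (∀ X Y : ℝ × ℝ → ℂ, Vop (X + Y) = Vop X + Vop Y) ∧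
    (∀ (c : ℂ) (X : ℝ × ℝ → ℂ), Vop (c • X) = c • Vop X) ∧
    (∀ X : ℝ × ℝ → ℂ, MemLp X 2 (mulHaar.prod mulHaar) →
      MemLp (Vop X) 2 (mulHaar.prod mulHaar) ∧
      eLpNorm (Vop X) 2 (mulHaar.prod mulHaar) = eLpNorm X 2 (mulHaar.prod mulHaar)) :=
  ⟨fun _ _ => rfl, fun _ _ => rfl, fun _ hX =>
    ⟨hX.comp_measurePreserving measurePreserving_vopCoords,
      eLpNorm_comp_measurePreserving hX.aestronglyMeasurable measurePreserving_vopCoords⟩⟩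
end

section
/- For ξ₁, η₁, ξ₂, η₂ ∈ L²(ℝ^×, dt/|t|) and (b,a) ∈ ℝ ⋊ ℝ^×, the product of matrix coefficients satisfies ⟨π(b,a)ξ₁, η₁⟩ · ⟨π(b,a)ξ₂, η₂⟩ = ∫_{ℝ^×} ⟨π(b,a) (λ(1+h)ξ₁ · λ(1+h⁻¹)ξ₂), λ(1+h)η₁ · λ(1+h⁻¹)η₂⟩ dh/|h|, where the integral converges absolutely. -/
/-!
Write `⟨π(b,a)ξ, η⟩ = ∫ f(t) dt/|t|` with `f(t) = e^{2πibt} ξ(ta) conj(η(t))`. The product of two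
coefficients is `∫∫ f₁(u) f₂(v)`; since `dt/|t|` is invariant under dilations, the substitution
`v = uh` turns it into `∫ (∫ f₁(u) f₂(uh) du/|u|) dh/|h|`. For fixed `h`, the substitution
`t = (1+h)u` identifies the inner integral with the coefficient of the fused vectors, because
`(1+h)/(1+h⁻¹) = h` and the character splits as `e^{2πib(1+h)u} = e^{2πibu} e^{2πibuh}`.
-/

open MeasureTheory

/-- The representation `(π(b,a)ξ)(t) = e^{2πibt} ξ(ta)`. -/
noncomputable def piOp (b a : ℝ) (f : ℝ → ℂ) : ℝ → ℂ :=
  fun t => Complex.exp (2 * Real.pi * Complex.I * b * t) * f (t * a)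

/-- The inner product `⟨f, g⟩ = ∫ f(t) conj(g(t)) dt/|t|` of `L²(ℝˣ, dt/|t|)`. -/
noncomputable def ip (f g : ℝ → ℂ) : ℂ :=
  ∫ t, f t * (starRingEnd ℂ) (g t) ∂mulHaar

/-- `λ(1+h)ξ₁ · λ(1+h⁻¹)ξ₂`, i.e. `t ↦ ξ₁(t/(1+h)) · ξ₂(t/(1+h⁻¹))`. -/
noncomputable def Fprod (ξ₁ ξ₂ : ℝ → ℂ) (h : ℝ) : ℝ → ℂ :=
  fun t => ξ₁ (t / (1 + h)) * ξ₂ (t / (1 + h⁻¹))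

open scoped ENNReal

instance inst_s9 : SigmaFinite mulHaar := by unfold mulHaar; infer_instance

instance inst_s9_2 : NullSingletonClass mulHaar := by unfold mulHaar; infer_instance

theorem measurePreserving_mul_left_mulHaar {c : ℝ} (hc : c ≠ 0) :
    MeasurePreserving (c * ·) mulHaar mulHaar := by
  refine ⟨measurable_const_mul c, ?_⟩
  ext s hs
  have hpre : MeasurableSet ((c * ·) ⁻¹' s) := measurable_const_mul c hs
  have himage : (c * ·) '' ((c * ·) ⁻¹' s) = s :=
    Set.image_preimage_eq s (mul_left_surjective₀ hc)
  have hderiv : ∀ x ∈ (c * ·) ⁻¹' s, HasDerivWithinAt (c * ·) c ((c * ·) ⁻¹' s) x :=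
    fun x _ => by simpa using ((hasDerivAt_id x).const_mul c).hasDerivWithinAt
  rw [Measure.map_apply (measurable_const_mul c) hs, mulHaar, withDensity_apply _ hs,
    withDensity_apply _ hpre]
  conv_rhs => rw [← himage, lintegral_image_eq_lintegral_abs_deriv_mul hpre hderiv
    (mul_right_injective₀ hc).injOn]
  -- the Jacobian `|c|` is absorbed by the density: `|c| / |c x| = 1 / |x|`,
  -- also at `x = 0` thanks to `1 / 0 = 0`
  refine setLIntegral_congr_fun hpre fun x _ => ?_
  rw [← ENNReal.ofReal_mul (abs_nonneg c), abs_mul]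
  rcases eq_or_ne x 0 with rfl | hx
  · simp
  · field_simp

theorem integral_comp_mul_left_mulHaar {E : Type*} [NormedAddCommGroup E] [NormedSpace ℝ E]
    {c : ℝ} (hc : c ≠ 0) (g : ℝ → E) :
    ∫ t, g (c * t) ∂mulHaar = ∫ t, g t ∂mulHaar :=
  (measurePreserving_mul_left_mulHaar hc).integral_comp (measurableEmbedding_mulLeft₀ hc) g

theorem measurePreserving_prod_mul_mulHaar :
    MeasurePreserving (fun p : ℝ × ℝ => (p.1, p.1 * p.2))
      (mulHaar.prod mulHaar) (mulHaar.prod mulHaar) :=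
  (MeasurePreserving.id mulHaar).skew_product (measurable_fst.mul measurable_snd) <| by
    filter_upwards [mulHaar.ae_ne 0] with u hu
    exact (measurePreserving_mul_left_mulHaar hu).map_eq

section Fubini

variable {𝕜 : Type*} [RCLike 𝕜] {f g : ℝ → 𝕜}

theorem integrable_mul_comp_mul_prod_mulHaar (hf : Integrable f mulHaar)
    (hg : Integrable g mulHaar) :
    Integrable (fun p : ℝ × ℝ => f p.1 * g (p.1 * p.2)) (mulHaar.prod mulHaar) :=
  (measurePreserving_prod_mul_mulHaar.integrable_comp (hf.mul_prod hg).1).mpr (hf.mul_prod hg)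

theorem integrable_integral_mul_comp_mul_mulHaar (hf : Integrable f mulHaar)
    (hg : Integrable g mulHaar) :
    Integrable (fun h => ∫ u, f u * g (u * h) ∂mulHaar) mulHaar :=
  (integrable_mul_comp_mul_prod_mulHaar hf hg).swap.integral_prod_left

theorem integral_mul_integral_eq_integral_integral_comp_mul_mulHaar
    (hf : Integrable f mulHaar) (hg : Integrable g mulHaar) :
    (∫ u, f u ∂mulHaar) * ∫ v, g v ∂mulHaar
      = ∫ h, ∫ u, f u * g (u * h) ∂mulHaar ∂mulHaar := by
  have hΦ := measurePreserving_prod_mul_mulHaar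
  rw [← integral_prod_mul, ← integral_prod_symm _ (integrable_mul_comp_mul_prod_mulHaar hf hg)]
  have h := integral_map (f := fun q : ℝ × ℝ => f q.1 * g q.2) hΦ.measurable.aemeasurable
    (by rw [hΦ.map_eq]; exact (hf.mul_prod hg).1)
  rwa [hΦ.map_eq] at h

end Fubini

theorem memLp_piOp {p : ℝ≥0∞} {ξ : ℝ → ℂ} (hξ : MemLp ξ p mulHaar) (b : ℝ) {a : ℝ} (ha : a ≠ 0) :
    MemLp (piOp b a ξ) p mulHaar := by
  have hξa : MemLp (fun t => ξ (t * a)) p mulHaar := by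
    simpa only [Function.comp_def, mul_comm a] using
      hξ.comp_measurePreserving (measurePreserving_mul_left_mulHaar ha)
  refine hξa.of_le ?_ (.of_forall fun t => ?_)
  · exact (by fun_prop : Continuous fun t : ℝ => Complex.exp (2 * Real.pi * Complex.I * b * t))
      |>.aestronglyMeasurable.mul hξa.1
  · rw [piOp, norm_mul, Complex.norm_exp]
    simp

theorem integrable_piOp_mul_conj {ξ η : ℝ → ℂ} (hξ : MemLp ξ 2 mulHaar) (hη : MemLp η 2 mulHaar)
    (b : ℝ) {a : ℝ} (ha : a ≠ 0) :
    Integrable (fun t => piOp b a ξ t * starRingEnd ℂ (η t)) mulHaar :=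
  (memLp_piOp hξ b ha).integrable_mul hη.star

theorem piOp_Fprod_mul_conj {ξ₁ ξ₂ η₁ η₂ : ℝ → ℂ} (b a : ℝ) {h : ℝ} (h0 : h ≠ 0)
    (h1 : 1 + h ≠ 0) (u : ℝ) :
    piOp b a (Fprod ξ₁ ξ₂ h) ((1 + h) * u) * starRingEnd ℂ (Fprod η₁ η₂ h ((1 + h) * u))
      = piOp b a ξ₁ u * starRingEnd ℂ (η₁ u)
          * (piOp b a ξ₂ (u * h) * starRingEnd ℂ (η₂ (u * h))) := by
  have hinv : 1 + h⁻¹ = (1 + h) / h := by field_simp; ring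
  have hexp : Complex.exp (2 * Real.pi * Complex.I * b * ↑((1 + h) * u))
      = Complex.exp (2 * Real.pi * Complex.I * b * u)
        * Complex.exp (2 * Real.pi * Complex.I * b * ↑(u * h)) := by
    rw [← Complex.exp_add]; push_cast; ring_nf
  have harg₁ : (1 + h) * u * a / (1 + h) = u * a := by field_simp
  have harg₂ : (1 + h) * u * a / (1 + h⁻¹) = u * h * a := by rw [hinv]; field_simp
  have harg₃ : (1 + h) * u / (1 + h) = u := by field_simp
  have harg₄ : (1 + h) * u / (1 + h⁻¹) = u * h := by rw [hinv]; field_simp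
  simp only [piOp, Fprod, map_mul, hexp, harg₁, harg₂, harg₃, harg₄]
  ring

theorem ip_piOp_Fprod_eq_integral {ξ₁ ξ₂ η₁ η₂ : ℝ → ℂ} (b a : ℝ) {h : ℝ} (h0 : h ≠ 0)
    (h1 : 1 + h ≠ 0) :
    ip (piOp b a (Fprod ξ₁ ξ₂ h)) (Fprod η₁ η₂ h)
      = ∫ u, piOp b a ξ₁ u * starRingEnd ℂ (η₁ u)
          * (piOp b a ξ₂ (u * h) * starRingEnd ℂ (η₂ (u * h))) ∂mulHaar := by
  rw [ip, ← integral_comp_mul_left_mulHaar h1]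
  simp only [piOp_Fprod_mul_conj b a h0 h1]

/-- Fusion formula for matrix coefficients of `π`:
`⟨π(b,a)ξ₁, η₁⟩ ⟨π(b,a)ξ₂, η₂⟩
 = ∫ ⟨π(b,a)(λ(1+h)ξ₁ · λ(1+h⁻¹)ξ₂), λ(1+h)η₁ · λ(1+h⁻¹)η₂⟩ dh/|h|`,
with the integral converging absolutely. -/
theorem fusion_of_coefficients (ξ₁ η₁ ξ₂ η₂ : ℝ → ℂ)
    (hξ₁ : MemLp ξ₁ 2 mulHaar) (hη₁ : MemLp η₁ 2 mulHaar)
    (hξ₂ : MemLp ξ₂ 2 mulHaar) (hη₂ : MemLp η₂ 2 mulHaar)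
    (b a : ℝ) (ha : a ≠ 0) :
    Integrable (fun h => ip (piOp b a (Fprod ξ₁ ξ₂ h)) (Fprod η₁ η₂ h)) mulHaar ∧
    ip (piOp b a ξ₁) η₁ * ip (piOp b a ξ₂) η₂
      = ∫ h, ip (piOp b a (Fprod ξ₁ ξ₂ h)) (Fprod η₁ η₂ h) ∂mulHaar := by
  have hf₁ := integrable_piOp_mul_conj hξ₁ hη₁ b ha
  have hf₂ := integrable_piOp_mul_conj hξ₂ hη₂ b ha
  have hfusion : (fun h => ip (piOp b a (Fprod ξ₁ ξ₂ h)) (Fprod η₁ η₂ h))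
      =ᵐ[mulHaar] fun h => ∫ u, piOp b a ξ₁ u * starRingEnd ℂ (η₁ u)
          * (piOp b a ξ₂ (u * h) * starRingEnd ℂ (η₂ (u * h))) ∂mulHaar := by
    filter_upwards [mulHaar.ae_ne 0, mulHaar.ae_ne (-1)] with h h0 h1
    exact ip_piOp_Fprod_eq_integral b a h0 fun h1' => h1 (by linarith)
  exact ⟨(integrable_integral_mul_comp_mul_mulHaar hf₁ hf₂).congr hfusion.symm,
    (integral_mul_integral_eq_integral_integral_comp_mul_mulHaar hf₁ hf₂).trans
      (integral_congr_ae hfusion.symm)⟩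
end
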